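/- arXiv:2403.07619 — 5 statements merged into one kernel-verified Lean document; each statement's English description precedes it below -/
import Mathlib

section
/- Let R be a ring and M a left R-module. M is finitely generated if and only if for every family (Q_i)_{i∈I} of left R-modules, the canonical map φ : M ⊗_R (∏_{i∈I} Q_i) → ∏_{i∈I} (M ⊗_R Q_i), sending m ⊗ (q_i) to (m ⊗ q_i), is surjective. -/
/-!
If `M` is spanned by a finite set `s`, every element of `M ⊗ Q` has the form `∑ m ∈ s, m ⊗ q m`;
choosing such `q` componentwise gives a preimage of any family in `∏ i, M ⊗ Q i`.
Conversely, take `Q = (fun _ : M => R)` and a preimage `∑ j, m_j ⊗ r_j` of `(m ⊗ 1)_m`: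
evaluating at `m` gives `m = ∑ j, r_j m • m_j`, so the `m_j` span `M`.
-/

open TensorProduct

namespace TensorProduct

variable {R M : Type*} [CommSemiring R] [AddCommMonoid M] [Module R M]

theorem exists_eq_sum_tmul_of_span_eq_top {Q : Type*} [AddCommMonoid Q] [Module R Q]
    {s : Finset M} (hs : Submodule.span R (s : Set M) = ⊤) (t : M ⊗[R] Q) :
    ∃ q : M → Q, t = ∑ m ∈ s, m ⊗ₜ[R] q m := by
  induction t with
  | zero => exact ⟨0, by simp⟩
  | tmul m n =>
    obtain ⟨c, -, hc⟩ := Submodule.mem_span_finset.mp (hs ▸ Submodule.mem_top : m ∈ _)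
    exact ⟨fun a => c a • n, by simp_rw [← hc, sum_tmul, smul_tmul]⟩
  | add t₁ t₂ h₁ h₂ =>
    obtain ⟨q₁, rfl⟩ := h₁
    obtain ⟨q₂, rfl⟩ := h₂
    exact ⟨q₁ + q₂, by simp only [Pi.add_apply, tmul_add, Finset.sum_add_distrib]⟩

theorem piRightHom_surjective [Module.Finite R M] {ι : Type*} (Q : ι → Type*)
    [∀ i, AddCommMonoid (Q i)] [∀ i, Module R (Q i)] :
    Function.Surjective (piRightHom R R M Q) := by
  intro t
  obtain ⟨s, hs⟩ := Module.Finite.fg_top (R := R) (M := M)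
  choose q hq using fun i => exists_eq_sum_tmul_of_span_eq_top hs (t i)
  refine ⟨∑ m ∈ s, m ⊗ₜ[R] fun i => q i m, funext fun i => ?_⟩
  simp [hq i]

end TensorProduct

theorem Module.Finite.of_tmul_one_mem_range_piRightHom {R M : Type*} [CommSemiring R]
    [AddCommMonoid M] [Module R M]
    (h : (fun m : M => m ⊗ₜ[R] (1 : R)) ∈ LinearMap.range (piRightHom R R M fun _ : M => R)) :
    Module.Finite R M := by
  classical
  obtain ⟨x, hx⟩ := h
  obtain ⟨S, rfl⟩ := exists_finset x
  refine ⟨⟨S.image Prod.fst, eq_top_iff.mpr fun m _ => ?_⟩⟩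
  have hm : m = ∑ p ∈ S, p.2 m • p.1 := by
    simpa using congrArg (TensorProduct.rid R M) (congrFun hx m).symm
  rw [hm]
  exact Submodule.sum_mem _ fun p hp =>
    Submodule.smul_mem _ _ (Submodule.subset_span (Finset.mem_image_of_mem _ hp))

/-- A module `M` over a ring `R` is finitely generated if and only if
for every family `(Q i)_{i ∈ I}` of `R`-modules, the canonical map
`M ⊗[R] (∏ i, Q i) → ∏ i, (M ⊗[R] Q i)`, sending `m ⊗ (q i)` to `(m ⊗ q i)`, is surjective. -/
theorem finite_iff_piRightHom_surjective
    (R : Type) [CommRing R] (M : Type) [AddCommGroup M] [Module R M] :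
    Module.Finite R M ↔
      ∀ (ι : Type) (Q : ι → Type) [∀ i, AddCommGroup (Q i)] [∀ i, Module R (Q i)],
        Function.Surjective (TensorProduct.piRightHom R R M Q) :=
  ⟨fun _ _ Q _ _ => piRightHom_surjective Q,
    fun h => .of_tmul_one_mem_range_piRightHom (LinearMap.mem_range.mpr (h M _ _))⟩
end

section
/- Let R be a ring and M a right R-module. If M is finitely presented, then for every family (Q_i)_{i∈I} of left R-modules, the canonical map φ : M ⊗_R (∏_{i∈I} Q_i) → ∏_{i∈I} (M ⊗_R Q_i) is an isomorphism. -/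
open TensorProduct LinearMap

/-- Naturality of `piRightHom` in the module variable. -/
lemma piRightHom_naturality_aux {R : Type} [CommRing R] {A B : Type}
    [AddCommGroup A] [Module R A] [AddCommGroup B] [Module R B] (h : A →ₗ[R] B)
    {ι : Type} (Q : ι → Type) [∀ i, AddCommGroup (Q i)] [∀ i, Module R (Q i)]
    (x : A ⊗[R] (∀ i, Q i)) (i : ι) :
    TensorProduct.piRightHom R R B Q (h.rTensor (∀ i, Q i) x) i
      = h.rTensor (Q i) (TensorProduct.piRightHom R R A Q x i) := by
  induction x using TensorProduct.induction_on with
  | zero => simp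
  | tmul a q => simp
  | add x y hx hy => simp [hx, hy]


/-- Auxiliary equivalence `(κ → R) ⊗ P ≃ (κ → P)`. -/
noncomputable def tensorPiScalarLeft (R κ : Type) [CommRing R] [Fintype κ] [DecidableEq κ]
    (P : Type) [AddCommGroup P] [Module R P] : ((κ → R) ⊗[R] P) ≃ₗ[R] (κ → P) :=
  (TensorProduct.comm R (κ → R) P).trans (TensorProduct.piScalarRight R R P κ)

@[simp] lemma tensorPiScalarLeft_tmul (R κ : Type) [CommRing R] [Fintype κ] [DecidableEq κ]
    (P : Type) [AddCommGroup P] [Module R P] (x : κ → R) (p : P) :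
    tensorPiScalarLeft R κ P (x ⊗ₜ p) = fun k => x k • p := by
  simp [tensorPiScalarLeft, TensorProduct.comm_tmul]

set_option synthInstance.maxHeartbeats 800000 in
/-- For a finite free module `κ → R`, `piRightHom` is bijective. -/
lemma piRightHom_bijective_free {R : Type} [CommRing R] (κ : Type) [Fintype κ]
    [DecidableEq κ] {ι : Type} (Q : ι → Type) [∀ i, AddCommGroup (Q i)]
    [∀ i, Module R (Q i)] :
    Function.Bijective (TensorProduct.piRightHom R R (κ → R) Q) := by
  classical
  have key' : ∀ (z : (κ → R) ⊗[R] (∀ j, Q j)) (i : ι) (k : κ),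
      tensorPiScalarLeft R κ (Q i) (TensorProduct.piRightHom R R (κ → R) Q z i) k
        = tensorPiScalarLeft R κ (∀ j, Q j) z k i := by
    intro z i k
    induction z using TensorProduct.induction_on with
    | zero => simp
    | tmul x q => simp
    | add x y hx hy => simp [map_add, hx, hy]
  have key : ∀ (z : (κ → R) ⊗[R] (∀ j, Q j)) (i : ι),
      TensorProduct.piRightHom R R (κ → R) Q z i
        = (tensorPiScalarLeft R κ (Q i)).symm
            (fun k => tensorPiScalarLeft R κ (∀ j, Q j) z k i) := by
    intro z i
    apply (tensorPiScalarLeft R κ (Q i)).injective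
    funext k
    simp [key', LinearEquiv.apply_symm_apply]
  have : ⇑(TensorProduct.piRightHom R R (κ → R) Q)
      = (fun v : ∀ i, κ → Q i => fun i => (tensorPiScalarLeft R κ (Q i)).symm (v i))
        ∘ (fun u : κ → ∀ j, Q j => fun i k => u k i)
        ∘ ⇑(tensorPiScalarLeft R κ (∀ j, Q j)) := by
    funext z
    funext i
    exact key z i
  rw [this]
  exact ((Equiv.piCongrRight fun i => (tensorPiScalarLeft R κ (Q i)).symm.toEquiv).bijective.comp
    (Equiv.piComm (fun k i => Q i)).bijective).comp (tensorPiScalarLeft R κ (∀ j, Q j)).bijective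

/-- If `M` is a finitely presented module over a ring `R`, then for every
family `(Q i)_{i ∈ I}` of `R`-modules, the canonical map
`M ⊗[R] (∏ i, Q i) → ∏ i, (M ⊗[R] Q i)` is an isomorphism (i.e. bijective). -/
theorem piRightHom_bijective_of_finitePresentation
    (R : Type) [CommRing R] (M : Type) [AddCommGroup M] [Module R M]
    [Module.FinitePresentation R M]
    (ι : Type) (Q : ι → Type) [∀ i, AddCommGroup (Q i)] [∀ i, Module R (Q i)] :
    Function.Bijective (TensorProduct.piRightHom R R M Q) := by
  classical
  obtain ⟨s, hs, hK⟩ := ‹Module.FinitePresentation R M›.out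
  obtain ⟨t, ht⟩ := hK
  -- the presentation maps
  set g₀ : (s →₀ R) →ₗ[R] M := Finsupp.linearCombination R ((↑) : s → M) with hg₀def
  have hg₀ : Function.Surjective g₀ := by
    rw [← LinearMap.range_eq_top, hg₀def, Finsupp.range_linearCombination,
      Subtype.range_coe_subtype, Finset.setOf_mem, hs]
  set f₀ : (t →₀ R) →ₗ[R] (s →₀ R) :=
    Finsupp.linearCombination R ((↑) : t → (s →₀ R)) with hf₀def
  have hf₀ : LinearMap.range f₀ = LinearMap.ker g₀ := by
    rw [hf₀def, Finsupp.range_linearCombination, Subtype.range_coe_subtype,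
      Finset.setOf_mem, ht]
  -- transport to pi-type free modules
  set eB : (s → R) ≃ₗ[R] (s →₀ R) := (Finsupp.linearEquivFunOnFinite R R s).symm
  set eA : (t → R) ≃ₗ[R] (t →₀ R) := (Finsupp.linearEquivFunOnFinite R R t).symm
  set g : (s → R) →ₗ[R] M := g₀ ∘ₗ (eB : (s → R) →ₗ[R] (s →₀ R)) with hgdef
  set f : (t → R) →ₗ[R] (s → R) :=
    (eB.symm : (s →₀ R) →ₗ[R] (s → R)) ∘ₗ f₀ ∘ₗ (eA : (t → R) →ₗ[R] (t →₀ R)) with hfdef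
  have hg : Function.Surjective g := hg₀.comp eB.surjective
  have hexact : Function.Exact f g := by
    rw [LinearMap.exact_iff]
    ext x
    simp only [hgdef, hfdef, LinearMap.mem_ker, LinearMap.coe_comp, Function.comp_apply,
      LinearMap.mem_range, LinearEquiv.coe_coe]
    constructor
    · intro hx
      have : eB x ∈ LinearMap.range f₀ := by rw [hf₀]; exact hx
      obtain ⟨y, hy⟩ := this
      exact ⟨eA.symm y, by simp [hy]⟩
    · rintro ⟨y, rfl⟩
      have : f₀ (eA y) ∈ LinearMap.ker g₀ := by rw [← hf₀]; exact ⟨eA y, rfl⟩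
      simpa using this
  have hgf : g.comp f = 0 := by
    apply LinearMap.ext
    intro x
    exact hexact.apply_apply_eq_zero x
  -- the middle and left vertical maps are bijective (finite index)
  have hφB : Function.Bijective (TensorProduct.piRightHom R R (s → R) Q) :=
    piRightHom_bijective_free s Q
  have hφA : Function.Bijective (TensorProduct.piRightHom R R (t → R) Q) :=
    piRightHom_bijective_free t Q
  constructor
  · -- injectivity
    rw [injective_iff_map_eq_zero]
    intro x hx
    obtain ⟨u, rfl⟩ := LinearMap.rTensor_surjective (∀ i, Q i) hg x
    have hmem : ∀ i, TensorProduct.piRightHom R R (s → R) Q u i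
        ∈ Set.range (f.rTensor (Q i)) := by
      intro i
      apply (rTensor_exact (Q i) hexact hg _).mp
      rw [← piRightHom_naturality_aux g Q u i, hx]
      rfl
    choose v hv using hmem
    obtain ⟨w, hwv⟩ := hφA.surjective v
    have hu : f.rTensor (∀ i, Q i) w = u := by
      apply hφB.injective
      funext i
      rw [piRightHom_naturality_aux f Q w i, hwv, hv]
    rw [← hu, ← LinearMap.rTensor_comp_apply, hgf]
    simp
  · -- surjectivity
    intro y
    have : ∀ i, ∃ z, g.rTensor (Q i) z = y i := fun i =>
      LinearMap.rTensor_surjective (Q i) hg (y i)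
    choose z hz using this
    obtain ⟨w, hwz⟩ := hφB.surjective z
    refine ⟨g.rTensor (∀ i, Q i) w, ?_⟩
    funext i
    rw [piRightHom_naturality_aux g Q w i, hwz, hz]
end

section
/- A ring R is left coherent (every finitely generated left ideal is finitely presented) if and only if the direct product of any family of flat right R-modules is a flat right R-module. -/
/-!
For a finitely presented module `N`, the canonical map `N ⊗ ∏ Mᵢ → ∏ (N ⊗ Mᵢ)` is bijective:
this is clear for finite free `N`, and passes to a presentation `Rᵐ → Rⁿ → N → 0` by right
exactness of `⊗` and the five lemma. So over a coherent ring, for every finitely generated ideal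
`I` the map `I ⊗ ∏ Fᵢ → ∏ Fᵢ` is `I ⊗ ∏ Fᵢ ≅ ∏ (I ⊗ Fᵢ) ↪ ∏ Fᵢ`, which is injective when the
`Fᵢ` are flat.

Conversely, let `I` be generated by `a₁, …, aₙ` with module of relations `K ⊆ Rⁿ`. The coordinate
functions `xᵢ ∈ R^K` satisfy `∑ aᵢ xᵢ = 0`. If `R^K` is flat, the equational criterion writes
`xᵢ = ∑ⱼ Aᵢⱼ yⱼ` with every column of `A` in `K`; evaluating at `k ∈ K` gives `k = ∑ⱼ yⱼ(k) Aⱼ`,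
so `K` is finitely generated and `I ≅ Rⁿ / K` is finitely presented.
-/

/-- A ring is left coherent if every finitely generated (left) ideal is finitely
presented as a module. -/
def IsLeftCoherentRing (R : Type) [Ring R] : Prop :=
  ∀ I : Ideal R, I.FG → Module.FinitePresentation R I

open TensorProduct LinearMap

theorem LinearMap.exact_piMap {R ι : Type*} [Semiring R] {M N P : ι → Type*}
    [∀ i, AddCommMonoid (M i)] [∀ i, Module R (M i)] [∀ i, AddCommMonoid (N i)]
    [∀ i, Module R (N i)] [∀ i, AddCommMonoid (P i)] [∀ i, Module R (P i)]
    {f : ∀ i, M i →ₗ[R] N i} {g : ∀ i, N i →ₗ[R] P i} (h : ∀ i, Function.Exact (f i) (g i)) :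
    Function.Exact (piMap f) (piMap g) := fun y ↦ by
  simp only [coe_piMap, Set.mem_range, funext_iff, Pi.map_apply, Pi.zero_apply]
  exact (forall_congr' fun i ↦ h i (y i)).trans Classical.skolem

namespace TensorProduct

section CommSemiring

variable {R : Type*} [CommSemiring R]

noncomputable def piScalarLeft (κ N : Type*) [Fintype κ] [DecidableEq κ] [AddCommMonoid N]
    [Module R N] : ((κ → R) ⊗[R] N) ≃ₗ[R] (κ → N) :=
  (TensorProduct.comm R (κ → R) N).trans (piScalarRight R R N κ)

@[simp]
theorem piScalarLeft_tmul {κ N : Type*} [Fintype κ] [DecidableEq κ] [AddCommMonoid N]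
    [Module R N] (v : κ → R) (n : N) : piScalarLeft κ N (v ⊗ₜ n) = fun j ↦ v j • n := by
  simp [piScalarLeft]

variable {ι : Type*} (M : ι → Type*) [∀ i, AddCommMonoid (M i)] [∀ i, Module R (M i)]

theorem piMap_rTensor_comp_piRightHom {A B : Type*} [AddCommMonoid A] [Module R A]
    [AddCommMonoid B] [Module R B] (p : A →ₗ[R] B) :
    piMap (fun i ↦ p.rTensor (M i)) ∘ₗ piRightHom R R A M =
      piRightHom R R B M ∘ₗ p.rTensor (∀ i, M i) := by
  ext a m i
  simp

theorem piRightHom_bijective_of_fintype (κ : Type*) [Fintype κ] [DecidableEq κ] :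
    Function.Bijective (piRightHom R R (κ → R) M) := by
  have hcomp : Pi.map (fun i ↦ piScalarLeft κ (M i)) ∘ piRightHom R R (κ → R) M =
      Equiv.piComm _ ∘ piScalarLeft κ (∀ i, M i) := by
    ext x i j
    induction x using TensorProduct.induction_on with
    | zero => simp [Function.swap]
    | tmul v m => simp [Function.swap]
    | add x y hx hy => simp_all [Function.swap]
  have hmap : Function.Bijective (Pi.map fun i ↦ piScalarLeft (R := R) κ (M i)) :=
    (Equiv.piCongrRight fun i ↦ (piScalarLeft κ (M i)).toEquiv).bijective
  rw [← Function.Bijective.of_comp_iff' hmap, hcomp]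
  exact (Equiv.piComm _).bijective.comp (piScalarLeft κ _).bijective

end CommSemiring

section CommRing

variable {R : Type*} [CommRing R] {ι : Type*} (M : ι → Type*) [∀ i, AddCommGroup (M i)]
  [∀ i, Module R (M i)]

theorem piRightHom_bijective_of_finitePresentation (N : Type*) [AddCommGroup N] [Module R N]
    [Module.FinitePresentation R N] : Function.Bijective (piRightHom R R N M) := by
  obtain ⟨n, m, f, g, hf, hfg⟩ := Module.FinitePresentation.exists_fin' R N
  exact bijective_of_surjective_of_bijective_of_right_exact
    (g.rTensor _) (f.rTensor _) (piMap fun i ↦ g.rTensor (M i)) (piMap fun i ↦ f.rTensor (M i))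
    (piRightHom R R _ M) (piRightHom R R _ M) (piRightHom R R N M)
    (piMap_rTensor_comp_piRightHom M g) (piMap_rTensor_comp_piRightHom M f)
    (rTensor_exact _ hfg hf) (exact_piMap fun _ ↦ rTensor_exact _ hfg hf)
    (piRightHom_bijective_of_fintype M _).2 (piRightHom_bijective_of_fintype M _)
    (rTensor_surjective _ hf) (Function.Surjective.piMap fun _ ↦ rTensor_surjective _ hf)

end CommRing

end TensorProduct

theorem Module.Flat.pi_of_isLeftCoherentRing {R : Type} [CommRing R] (hR : IsLeftCoherentRing R)
    {ι : Type*} (F : ι → Type*) [∀ i, AddCommGroup (F i)] [∀ i, Module R (F i)]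
    [∀ i, Module.Flat R (F i)] : Module.Flat R (∀ i, F i) := by
  refine Module.Flat.iff_rTensor_injective.mpr fun I hI ↦ ?_
  have : Module.FinitePresentation R I := hR I hI
  have hinj : Function.Injective
      (piMap (fun i ↦ I.subtype.rTensor (F i)) ∘ₗ piRightHom R R I F) :=
    (Function.Injective.piMap fun i ↦ rTensor_preserves_injective_linearMap _
      Subtype.val_injective).comp (piRightHom_bijective_of_finitePresentation F I).1
  rw [piMap_rTensor_comp_piRightHom, coe_comp] at hinj
  exact hinj.of_comp

theorem fg_ker_fintypeLinearCombination_of_flat_pi {R ι : Type*} [CommRing R] [Fintype ι]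
    (a : ι → R) [Module.Flat R (ker (Fintype.linearCombination R a) → R)] :
    (ker (Fintype.linearCombination R a)).FG := by
  set K := ker (Fintype.linearCombination R a)
  have hrel : ∑ i, a i • (fun k : K ↦ (k : ι → R) i) = 0 := by
    funext k
    have hk : Fintype.linearCombination R a k = 0 := k.2
    simpa only [Fintype.linearCombination_apply, Finset.sum_apply, Pi.smul_apply, Pi.zero_apply,
      smul_eq_mul, mul_comm] using hk
  obtain ⟨n, A, y, hx, hA⟩ := Module.Flat.isTrivialRelation_of_sum_smul_eq_zero hrel
  refine Submodule.fg_def.mpr ⟨Set.range fun j i ↦ A i j, Set.finite_range _, le_antisymm ?_ ?_⟩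
  · rw [Submodule.span_le]
    rintro _ ⟨j, rfl⟩
    simpa [K, Fintype.linearCombination_apply, mul_comm] using hA j
  · intro k hk
    have hk_eq : k = ∑ j, y j ⟨k, hk⟩ • fun i ↦ A i j := by
      funext i
      simpa [mul_comm] using congrFun (hx i) ⟨k, hk⟩
    rw [hk_eq]
    exact Submodule.sum_mem _ fun j _ ↦ Submodule.smul_mem _ _ (Submodule.subset_span ⟨j, rfl⟩)

theorem isLeftCoherentRing_of_forall_flat_pi {R : Type} [CommRing R]
    (h : ∀ ι : Type, Module.Flat R (ι → R)) : IsLeftCoherentRing R := by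
  intro I hI
  obtain ⟨n, a, rfl⟩ := Submodule.fg_iff_exists_fin_generating_family.mp hI
  have := h (ker (Fintype.linearCombination R a))
  rw [← Fintype.range_linearCombination]
  exact Module.finitePresentation_of_free_of_surjective _
    (Fintype.linearCombination R a).surjective_rangeRestrict
    (by rw [ker_rangeRestrict]; exact fg_ker_fintypeLinearCombination_of_flat_pi a)

/-- A ring `R` is left coherent (every finitely generated left ideal is
finitely presented) if and only if the direct product of any family of flat `R`-modules
is flat. -/
theorem isLeftCoherentRing_iff_pi_flat (R : Type) [CommRing R] :
    IsLeftCoherentRing R ↔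
      ∀ (ι : Type) (F : ι → Type) [∀ i, AddCommGroup (F i)] [∀ i, Module R (F i)],
        (∀ i, Module.Flat R (F i)) → Module.Flat R (∀ i, F i) := by
  refine ⟨fun hR _ F _ _ hF ↦ ?_, fun h ↦ ?_⟩
  · have := hF
    exact Module.Flat.pi_of_isLeftCoherentRing hR F
  · exact isLeftCoherentRing_of_forall_flat_pi fun ι ↦ h ι (fun _ ↦ R) fun _ ↦ Module.Flat.self
end

section
/- For a ring R, the following are equivalent: (1) the direct product of any family of copies of R is flat as a right R-module; (2) every finitely generated submodule of a free left R-module is finitely presented; (3) every finitely generated left ideal of R is finitely presented. -/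
/-!
By the equational criterion, `ι → R` is flat iff for every finite family `f` in `R`, any
`ι`-indexed family of relations among the `f i` lies in the span of finitely many relations.
Taking `ι` to be the module of relations itself, this holds for all `ι` iff every such module of
relations is finitely generated, i.e. iff every finitely generated ideal is finitely presented.
Coherence of `R` passes to free modules by splitting off one coordinate at a time: a finitely
generated `N ⊆ M × M'` is an extension of its image in `M'`, which is finitely presented, by a
kernel that is therefore finitely generated and embeds into `M`.
-/

open Module Submodule LinearMap

section

variable {R : Type*} [CommRing R]

section Relations

variable (R) {M : Type*} [AddCommGroup M] [Module R M] {ι : Type*} [Fintype ι]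

def relations (f : ι → M) : Submodule R (ι → R) :=
  ker (Fintype.linearCombination R f)

variable {R}

theorem mem_relations {f : ι → M} {v : ι → R} :
    v ∈ relations R f ↔ ∑ i, v i • f i = 0 :=
  Iff.rfl

theorem finitePresentation_span_iff_fg_relations (f : ι → M) :
    FinitePresentation R (span R (Set.range f)) ↔ (relations R f).FG := by
  rw [← Fintype.range_linearCombination, relations, ← ker_rangeRestrict]
  exact (FinitePresentation.fg_ker_iff _ (surjective_rangeRestrict _)).symm

end Relations

theorem Module.Flat.pi_of_fg_relations
    (h : ∀ {l : ℕ} (f : Fin l → R), (relations R f).FG) (ι : Type*) : Flat R (ι → R) := by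
  refine Flat.of_forall_isTrivialRelation fun {l f x} hfx => ?_
  obtain ⟨k, c, hc⟩ := fg_iff_exists_fin_generating_family.mp (h f)
  have hcol (t : ι) : (fun i => x i t) ∈ span R (Set.range c) := by
    rw [hc, mem_relations]
    simpa [mul_comm] using congrFun hfx t
  choose d hd using fun t => (mem_span_range_iff_exists_fun R).mp (hcol t)
  refine ⟨k, fun i j => c j i, fun j t => d t j, fun i => funext fun t => ?_, fun j => ?_⟩
  · simpa [mul_comm] using (congrFun (hd t) i).symm
  · have hcj : c j ∈ relations R f := hc ▸ subset_span (Set.mem_range_self j)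
    simpa [mul_comm] using mem_relations.mp hcj

theorem fg_relations_of_flat_pi {ι : Type*} [Fintype ι] (f : ι → R)
    [Flat R (relations R f → R)] : (relations R f).FG := by
  set K := relations R f
  have hx : ∑ i, f i • (fun k : K => (k : ι → R) i) = 0 := by
    funext k
    simpa [mul_comm] using mem_relations.mp k.2
  obtain ⟨m, a, y, hxy, ha⟩ := Flat.isTrivialRelation_of_sum_smul_eq_zero hx
  suffices K = span R (Set.range fun j i => a i j) from this ▸ fg_span (Set.finite_range _)
  refine le_antisymm (fun k hk => ?_) (span_le.mpr ?_)
  · rw [mem_span_range_iff_exists_fun]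
    refine ⟨fun j => y j ⟨k, hk⟩, funext fun i => ?_⟩
    simpa [mul_comm] using (congrFun (hxy i) ⟨k, hk⟩).symm
  · rintro _ ⟨j, rfl⟩
    simpa [K, mem_relations, mul_comm] using ha j

variable (R) in
def FGSubmodulesFinitelyPresented (M : Type*) [AddCommGroup M] [Module R M] : Prop :=
  ∀ N : Submodule R M, N.FG → FinitePresentation R N

variable {M M' P : Type*} [AddCommGroup M] [Module R M] [AddCommGroup M'] [Module R M']
  [AddCommGroup P] [Module R P]

theorem Module.FinitePresentation.of_injective [Module.Finite R P]
    (hM : FGSubmodulesFinitelyPresented R M) (g : P →ₗ[R] M) (hg : Function.Injective g) :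
    FinitePresentation R P := by
  have := hM (range g) (range_eq_map g ▸ Module.Finite.fg_top.map g)
  exact .of_equiv (LinearEquiv.ofInjective g hg).symm

namespace FGSubmodulesFinitelyPresented

theorem of_injective (hM : FGSubmodulesFinitelyPresented R M) (g : P →ₗ[R] M)
    (hg : Function.Injective g) : FGSubmodulesFinitelyPresented R P := fun N hN =>
  have := Module.Finite.iff_fg.mpr hN
  .of_injective hM (g ∘ₗ N.subtype) (hg.comp N.injective_subtype)

theorem prod (hM : FGSubmodulesFinitelyPresented R M) (hM' : FGSubmodulesFinitelyPresented R M') :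
    FGSubmodulesFinitelyPresented R (M × M') := by
  intro N hN
  have := Module.Finite.iff_fg.mpr hN
  let π := snd R M M' ∘ₗ N.subtype
  let φ := π.rangeRestrict
  have := hM' _ (range_eq_map π ▸ Module.Finite.fg_top.map π)
  have := Module.Finite.iff_fg.mpr (FinitePresentation.fg_ker φ (surjective_rangeRestrict _))
  have hinj : Function.Injective (fst R M M' ∘ₗ N.subtype ∘ₗ (ker φ).subtype) := by
    intro a b hab
    have ha : ((a : N) : M × M').2 = 0 := congrArg Subtype.val (mem_ker.mp a.2)
    have hb : ((b : N) : M × M').2 = 0 := congrArg Subtype.val (mem_ker.mp b.2)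
    exact Subtype.ext (Subtype.ext (Prod.ext hab (ha.trans hb.symm)))
  have := Module.FinitePresentation.of_injective (P := ker φ) hM _ hinj
  exact finitePresentation_of_ker φ (surjective_rangeRestrict _)

theorem pi_fin (hR : FGSubmodulesFinitelyPresented R R) :
    ∀ n : ℕ, FGSubmodulesFinitelyPresented R (Fin n → R)
  | 0 => hR.of_injective 0 (Function.injective_of_subsingleton _)
  | n + 1 => (hR.prod (pi_fin hR n)).of_injective
      (Fin.consLinearEquiv R fun _ => R).symm.toLinearMap (LinearEquiv.injective _)

theorem pi {ι : Type*} [Finite ι] (hR : FGSubmodulesFinitelyPresented R R) :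
    FGSubmodulesFinitelyPresented R (ι → R) := by
  have := Fintype.ofFinite ι
  exact (pi_fin hR _).of_injective
    (LinearEquiv.funCongrLeft R R (Fintype.equivFin ι).symm).toLinearMap (LinearEquiv.injective _)

theorem of_free [Free R M] (hR : FGSubmodulesFinitelyPresented R R) :
    FGSubmodulesFinitelyPresented R M := by
  classical
  intro N hN
  obtain ⟨S, rfl⟩ := hN
  have := Module.Finite.span_finset R S
  let b := Free.chooseBasis R M
  let s := S.biUnion fun x => (b.repr x).support
  have hsupp :
      span R (S : Set M) ≤ (Finsupp.supported R R (s : Set _)).comap b.repr.toLinearMap :=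
    span_le.mpr fun x hx => (Finsupp.mem_supported R _).mpr fun i hi =>
      Finset.mem_biUnion.mpr ⟨x, hx, hi⟩
  let coords : span R (S : Set M) →ₗ[R] (s → R) :=
    LinearMap.pi (fun i : s => b.coord i) ∘ₗ (span R (S : Set M)).subtype
  refine .of_injective (pi hR) coords fun v w hvw =>
    Subtype.ext (b.repr.injective (Finsupp.ext fun i => ?_))
  by_cases hi : i ∈ s
  · exact congrFun hvw ⟨i, hi⟩
  · exact ((Finsupp.mem_supported' R _).mp (hsupp v.2) i hi).trans
      ((Finsupp.mem_supported' R _).mp (hsupp w.2) i hi).symm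

end FGSubmodulesFinitelyPresented

end

/-- **Chase.** For a ring `R` the following are equivalent:
(1) any direct product of copies of `R` is flat;
(2) every finitely generated submodule of a free `R`-module is finitely presented;
(3) every finitely generated (left) ideal of `R` is finitely presented. -/
theorem chase_tfae (R : Type) [CommRing R] :
    List.TFAE
      [ ∀ ι : Type, Module.Flat R (ι → R),
        ∀ (F : Type) (_ : AddCommGroup F) (_ : Module R F), Module.Free R F →
          ∀ N : Submodule R F, N.FG → Module.FinitePresentation R N,
        ∀ I : Ideal R, I.FG → Module.FinitePresentation R I ] := by
  tfae_have 1 → 3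
  | hflat, I, hI => by
    obtain ⟨l, f, rfl⟩ := fg_iff_exists_fin_generating_family.mp hI
    have := hflat (relations R f)
    exact (finitePresentation_span_iff_fg_relations f).mpr (fg_relations_of_flat_pi f)
  tfae_have 3 → 1 := fun hideal => Flat.pi_of_fg_relations fun f =>
    (finitePresentation_span_iff_fg_relations f).mp (hideal _ (fg_span (Set.finite_range f)))
  tfae_have 3 → 2 := fun hideal _ _ _ _ => FGSubmodulesFinitelyPresented.of_free hideal
  tfae_have 2 → 3 := fun hfree => hfree R _ _ inferInstance
  tfae_finish
end

section
/- Let R be a ring, let 0 → K → F → M → 0 be a short exact sequence of right R-modules with F finitely generated free and K finitely generated, and let (Q_i)_{i∈I} be a family of left R-modules such that tensoring the sequence with ∏ Q_i remains exact on the left (e.g. ∏ Q_i is flat). If the canonical maps φ_K and φ_M are surjective and φ_F is an isomorphism, then φ_M is an isomorphism. -/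
/-- **Snake-lemma step.** Let `0 → K → F → M → 0` be a short exact sequence
of `R`-modules with `F` finitely generated free and `K` finitely generated, and let
`(Q i)_{i ∈ I}` be a family of `R`-modules such that tensoring the sequence with
`∏ i, Q i` remains exact on the left.  If the canonical maps
`φ_K : K ⊗ ∏ Q i → ∏ (K ⊗ Q i)` and `φ_M` are surjective and `φ_F` is an isomorphism,
then `φ_M` is an isomorphism. -/
theorem piRightHom_bijective_of_ses
    (R : Type) [CommRing R]
    (K F M : Type) [AddCommGroup K] [Module R K] [AddCommGroup F] [Module R F]
    [AddCommGroup M] [Module R M]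
    [Module.Finite R F] [Module.Free R F] [Module.Finite R K]
    (i : K →ₗ[R] F) (p : F →ₗ[R] M)
    (hi : Function.Injective i) (hp : Function.Surjective p)
    (hexact : Function.Exact i p)
    (ι : Type) (Q : ι → Type) [∀ j, AddCommGroup (Q j)] [∀ j, Module R (Q j)]
    (htens : Function.Injective (LinearMap.rTensor (∀ j, Q j) i))
    (hK : Function.Surjective (TensorProduct.piRightHom R R K Q))
    (hF : Function.Bijective (TensorProduct.piRightHom R R F Q))
    (hM : Function.Surjective (TensorProduct.piRightHom R R M Q)) :
    Function.Bijective (TensorProduct.piRightHom R R M Q) := by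
  refine ⟨?_, hM⟩
  have hcomm : ∀ (A B : Type) (_ : AddCommGroup A) (_ : Module R A)
      (_ : AddCommGroup B) (_ : Module R B)
      (f : A →ₗ[R] B) (x : TensorProduct R A (∀ j, Q j)) (j : ι),
      TensorProduct.piRightHom R R B Q (LinearMap.rTensor _ f x) j
        = LinearMap.rTensor (Q j) f (TensorProduct.piRightHom R R A Q x j) := by
    intro A B _ _ _ _ f x j
    induction x using TensorProduct.induction_on with
    | zero => simp
    | tmul a q => simp
    | add x y hx hy => simp [hx, hy]
  rw [injective_iff_map_eq_zero]
  intro x hx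
  obtain ⟨y, rfl⟩ := LinearMap.rTensor_surjective (∀ j, Q j) hp x
  have hexactj : ∀ j, Function.Exact (LinearMap.rTensor (Q j) i) (LinearMap.rTensor (Q j) p) :=
    fun j => rTensor_exact (Q j) hexact hp
  have h1 : ∀ j, ∃ z : TensorProduct R K (Q j), LinearMap.rTensor (Q j) i z
      = TensorProduct.piRightHom R R F Q y j := by
    intro j
    have h0 : LinearMap.rTensor (Q j) p (TensorProduct.piRightHom R R F Q y j) = 0 := by
      rw [← hcomm F M _ _ _ _ p y j, hx]
      simp
    exact (hexactj j _).mp h0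
  choose z hz using h1
  obtain ⟨w, hw⟩ := hK z
  have hwy : LinearMap.rTensor _ i w = y := by
    apply hF.1
    funext j
    rw [hcomm K F _ _ _ _ i w j, hw]
    exact hz j
  rw [← hwy, ← LinearMap.rTensor_comp_apply]
  have hpi : p ∘ₗ i = 0 := by
    ext k
    simpa using hexact.apply_apply_eq_zero k
  simp [hpi]
end
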